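/- arXiv:1901.00618 — 2 statements merged into one kernel-verified Lean document; each statement's English description precedes it below -/
import Mathlib

section
/- Let r₀ > 0 and α₀, α₁ > 0. Define u : ℝ² → ℝ by u(x) = ‖x‖³/α₁ if ‖x‖ < r₀ and u(x) = ‖x‖³/α₀ + (1/α₁ − 1/α₀)·r₀³ if ‖x‖ ≥ r₀, define a : ℝ² → ℝ by a(x) = α₁ if ‖x‖ < r₀ and a(x) = α₀ if ‖x‖ ≥ r₀, and let f(x) = −9‖x‖. Then u is a weak solution of −∇·(a∇u) = f on ℝ²: for every continuously differentiable, compactly supported test function φ : ℝ² → ℝ, ∫_{ℝ²} a(x)⟪∇u(x), ∇φ(x)⟫ dx = ∫_{ℝ²} f(x)φ(x) dx, where ∇u(x) is the gradient of u at the points ‖x‖ ≠ r₀ at which it is differentiable (the remaining circle has Lebesgue measure zero). -/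
/-!
On either side of the circle `‖x‖ = r₀` the jump of `a` is exactly compensated by the jump of
`∇u`: off that null set the flux `a ∇u` equals `3 ‖x‖ x`, a single `C¹` vector field on the
whole plane. Integrating by parts against it turns the weak form into `-∫ (div (3 ‖x‖ x)) φ`,
and `div (‖x‖ x) = (n + 1) ‖x‖` in dimension `n`, which is `3 ‖x‖` in the plane.
-/

open MeasureTheory InnerProductSpace Filter Topology

noncomputable section

variable {E : Type*} [NormedAddCommGroup E] [InnerProductSpace ℝ E]

def divergence (V : E → E) (x : E) : ℝ :=
  LinearMap.trace ℝ E (fderiv ℝ V x)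

section AddHaar

variable [FiniteDimensional ℝ E] [MeasurableSpace E] [BorelSpace E]
  {μ : Measure E} [μ.IsAddHaarMeasure]

theorem integral_inner_gradient_eq_neg_integral_divergence_mul {V : E → E} {φ : E → ℝ}
    (hV : ContDiff ℝ 1 V) (hφ : ContDiff ℝ 1 φ) (hφs : HasCompactSupport φ) :
    ∫ x, ⟪V x, gradient φ x⟫_ℝ ∂μ = -∫ x, divergence V x * φ x ∂μ := by
  let b := stdOrthonormalBasis ℝ E
  have hDV := hV.continuous_fderiv one_ne_zero
  have hDφ := hφ.continuous_fderiv one_ne_zero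
  have hinner (x : E) : ⟪V x, gradient φ x⟫_ℝ = ∑ i, ⟪b i, V x⟫_ℝ * fderiv ℝ φ x (b i) := by
    rw [← b.sum_inner_mul_inner]
    refine Finset.sum_congr rfl fun i _ ↦ ?_
    rw [real_inner_comm (b i), real_inner_comm (gradient φ x), inner_gradient_left]
  have hdiv (x : E) :
      divergence V x * φ x = ∑ i, ⟪b i, fderiv ℝ V x (b i)⟫_ℝ * φ x := by
    rw [divergence, LinearMap.trace_eq_sum_inner _ b, Finset.sum_mul]
    rfl
  have hint_left (i) : Integrable (fun x ↦ ⟪b i, V x⟫_ℝ * fderiv ℝ φ x (b i)) μ := by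
    refine Continuous.integrable_of_hasCompactSupport ?_ (hφs.fderiv_apply ℝ (b i)).mul_left
    fun_prop
  have hint_right (i) : Integrable (fun x ↦ ⟪b i, fderiv ℝ V x (b i)⟫_ℝ * φ x) μ := by
    refine Continuous.integrable_of_hasCompactSupport ?_ hφs.mul_left
    fun_prop
  have hparts (i) : ∫ x, ⟪b i, V x⟫_ℝ * fderiv ℝ φ x (b i) ∂μ
      = -∫ x, ⟪b i, fderiv ℝ V x (b i)⟫_ℝ * φ x ∂μ :=
    integral_bilinear_fderiv_right_eq_neg_left_of_integrable
      (B := (ContinuousLinearMap.mul ℝ ℝ).comp (innerSL ℝ (b i))) (hint_right i) (hint_left i)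
      (Continuous.integrable_of_hasCompactSupport (by fun_prop) hφs.mul_left)
      (fun x _ ↦ hV.differentiable one_ne_zero x) (fun x _ ↦ hφ.differentiable one_ne_zero x)
  simp_rw [hinner, hdiv]
  rw [integral_finsetSum _ fun i _ ↦ hint_left i, integral_finsetSum _ fun i _ ↦ hint_right i,
    ← Finset.sum_neg_distrib]
  exact Finset.sum_congr rfl fun i _ ↦ hparts i

theorem ae_norm_ne [Nontrivial E] (r : ℝ) : ∀ᵐ x ∂μ, ‖x‖ ≠ r := by
  filter_upwards [measure_eq_zero_iff_ae_notMem.1 (Measure.addHaar_sphere μ 0 r)] with x hx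
  simpa using hx

end AddHaar

theorem hasFDerivAt_norm {x : E} (hx : x ≠ 0) :
    HasFDerivAt (‖·‖) (‖x‖⁻¹ • innerSL ℝ x) x := by
  have h := (hasStrictFDerivAt_norm_sq x).hasFDerivAt.sqrt (by positivity)
  simp only [Real.sqrt_sq (norm_nonneg _)] at h
  convert h using 1
  ext y
  simp only [smul_apply, coe_innerSL_apply, smul_eq_mul, one_div, mul_inv_rev, nsmul_eq_mul,
    Nat.cast_ofNat]
  field_simp

def fderivNormSmul (x : E) : E →L[ℝ] E :=
  ‖x‖ • ContinuousLinearMap.id ℝ E + ‖x‖⁻¹ • rankOne ℝ x x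

theorem hasFDerivAt_norm_smul (x : E) :
    HasFDerivAt (fun y : E ↦ ‖y‖ • y) (fderivNormSmul x) x := by
  rcases eq_or_ne x 0 with rfl | hx
  · simp only [fderivNormSmul, norm_zero, zero_smul, inv_zero, zero_add]
    refine .of_isLittleO (Asymptotics.isLittleO_norm_left.1 ?_)
    simpa [norm_smul, sq] using Asymptotics.isLittleO_norm_pow_id (E' := E) one_lt_two
  · refine ((hasFDerivAt_norm hx).smul (hasFDerivAt_id x)).congr_fderiv ?_
    ext y
    simp [fderivNormSmul, smul_smul]

theorem norm_fderivNormSmul_le (x : E) : ‖fderivNormSmul x‖ ≤ 2 * ‖x‖ := by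
  calc ‖fderivNormSmul x‖
      ≤ ‖x‖ * ‖ContinuousLinearMap.id ℝ E‖ + ‖x‖⁻¹ * (‖x‖ * ‖x‖) := by
        refine (norm_add_le _ _).trans (add_le_add ?_ ?_) <;> simp [norm_smul]
    _ ≤ ‖x‖ * 1 + ‖x‖ := by
        gcongr
        · exact ContinuousLinearMap.norm_id_le
        · rw [← mul_assoc, inv_mul_eq_div, div_self_mul_self]
    _ = 2 * ‖x‖ := by ring

theorem continuous_fderivNormSmul : Continuous (fderivNormSmul (E := E)) := by
  refine continuous_iff_continuousAt.2 fun x ↦ ?_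
  rcases eq_or_ne x 0 with rfl | hx
  · rw [ContinuousAt, show fderivNormSmul (0 : E) = 0 by simp [fderivNormSmul],
      tendsto_zero_iff_norm_tendsto_zero]
    refine squeeze_zero (fun _ ↦ norm_nonneg _) norm_fderivNormSmul_le ?_
    simpa using ((continuous_norm (E := E)).const_mul 2).tendsto 0
  · have hrankOne : Continuous fun y : E ↦ rankOne ℝ y y :=
      (rankOne ℝ (E := E) (F := E)).continuous₂.comp (continuous_id.prodMk continuous_id)
    exact (continuous_norm.continuousAt.smul continuousAt_const).add
      ((continuous_norm.continuousAt.inv₀ (norm_ne_zero_iff.2 hx)).smul hrankOne.continuousAt)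

theorem contDiff_norm_smul : ContDiff ℝ 1 (fun x : E ↦ ‖x‖ • x) :=
  contDiff_one_iff_hasFDerivAt.2 ⟨_, continuous_fderivNormSmul, hasFDerivAt_norm_smul⟩

theorem divergence_norm_smul [FiniteDimensional ℝ E] (x : E) :
    divergence (fun y : E ↦ ‖y‖ • y) x = (Module.finrank ℝ E + 1) * ‖x‖ := by
  rw [divergence, (hasFDerivAt_norm_smul x).fderiv, fderivNormSmul]
  simp only [ContinuousLinearMap.toLinearMap_add, ContinuousLinearMap.toLinearMap_smul,
    ContinuousLinearMap.coe_id, map_add, map_smul, LinearMap.trace_id, trace_rankOne,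
    real_inner_self_eq_norm_sq, smul_eq_mul]
  rw [sq, inv_mul_eq_div, mul_self_div_self]
  ring

theorem hasGradientAt_norm_pow_three_div_add [CompleteSpace E] (α C : ℝ) (x : E) :
    HasGradientAt (fun y : E ↦ ‖y‖ ^ 3 / α + C) ((3 * ‖x‖ / α) • x) x := by
  have hcube : HasFDerivAt (fun y : E ↦ ‖y‖ ^ 3) ((3 * ‖x‖) • innerSL ℝ x) x := by
    simpa [show (3 : ℝ) - 2 = 1 by norm_num] using hasFDerivAt_norm_rpow x (p := 3) (by norm_num)
  have h := (hcube.const_mul α⁻¹).add_const C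
  simp_rw [← div_eq_inv_mul] at h
  rw [hasGradientAt_iff_hasFDerivAt]
  refine h.congr_fderiv ?_
  ext y
  simp only [smul_apply, innerSL_apply_apply, smul_eq_mul,
    toDual_apply_apply, real_inner_smul_left]
  ring

def interfaceSolution (r₀ α₀ α₁ : ℝ) (x : E) : ℝ :=
  if ‖x‖ < r₀ then ‖x‖ ^ 3 / α₁ else ‖x‖ ^ 3 / α₀ + (1 / α₁ - 1 / α₀) * r₀ ^ 3

def interfaceCoeff (r₀ α₀ α₁ : ℝ) (x : E) : ℝ :=
  if ‖x‖ < r₀ then α₁ else α₀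

theorem interfaceCoeff_smul_gradient_interfaceSolution [CompleteSpace E] {r₀ α₀ α₁ : ℝ}
    (hα₀ : α₀ ≠ 0) (hα₁ : α₁ ≠ 0) {x : E} (hx : ‖x‖ ≠ r₀) :
    interfaceCoeff r₀ α₀ α₁ x • gradient (interfaceSolution r₀ α₀ α₁) x = (3 * ‖x‖) • x := by
  rcases hx.lt_or_gt with hlt | hgt
  · have hloc : interfaceSolution r₀ α₀ α₁ =ᶠ[𝓝 x] fun y ↦ ‖y‖ ^ 3 / α₁ + 0 := by
      filter_upwards [(isOpen_lt continuous_norm continuous_const).mem_nhds hlt]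
        with y (hy : ‖y‖ < r₀)
      simp [interfaceSolution, hy]
    rw [((hasGradientAt_norm_pow_three_div_add α₁ 0 x).congr_of_eventuallyEq hloc).gradient,
      interfaceCoeff, if_pos hlt, smul_smul, mul_div_cancel₀ _ hα₁]
  · have hloc : interfaceSolution r₀ α₀ α₁ =ᶠ[𝓝 x]
        fun y ↦ ‖y‖ ^ 3 / α₀ + (1 / α₁ - 1 / α₀) * r₀ ^ 3 := by
      filter_upwards [(isOpen_lt continuous_const continuous_norm).mem_nhds hgt]
        with y (hy : r₀ < ‖y‖)
      simp [interfaceSolution, hy.not_gt]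
    rw [((hasGradientAt_norm_pow_three_div_add α₀ _ x).congr_of_eventuallyEq hloc).gradient,
      interfaceCoeff, if_neg hgt.not_gt, smul_smul, mul_div_cancel₀ _ hα₀]

end

theorem interface_solution_is_weak_solution_general
    (r₀ α₀ α₁ : ℝ) (hα₀ : 0 < α₀) (hα₁ : 0 < α₁)
    (u : EuclideanSpace ℝ (Fin 2) → ℝ) (a f : EuclideanSpace ℝ (Fin 2) → ℝ)
    (hu : ∀ x, u x =
      if ‖x‖ < r₀ then ‖x‖ ^ 3 / α₁ else ‖x‖ ^ 3 / α₀ + (1 / α₁ - 1 / α₀) * r₀ ^ 3)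
    (ha : ∀ x, a x = if ‖x‖ < r₀ then α₁ else α₀)
    (hf : ∀ x, f x = -9 * ‖x‖) :
    ∀ φ : EuclideanSpace ℝ (Fin 2) → ℝ, ContDiff ℝ 1 φ → HasCompactSupport φ →
      ∫ x, a x * ⟪gradient u x, gradient φ x⟫_ℝ = ∫ x, f x * φ x := by
  intro φ hφ hφs
  have hflux : ∀ᵐ x, a x * ⟪gradient u x, gradient φ x⟫_ℝ
      = 3 * ⟪‖x‖ • x, gradient φ x⟫_ℝ := by
    filter_upwards [ae_norm_ne r₀] with x hx
    have hax : a x • gradient u x = (3 * ‖x‖) • x := by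
      rw [funext hu, ha]
      exact interfaceCoeff_smul_gradient_interfaceSolution hα₀.ne' hα₁.ne' hx
    rw [← real_inner_smul_left, hax, mul_smul, real_inner_smul_left]
  calc ∫ x, a x * ⟪gradient u x, gradient φ x⟫_ℝ
      = 3 * -∫ x, divergence (fun y ↦ ‖y‖ • y) x * φ x := by
        rw [integral_congr_ae hflux, integral_const_mul,
          integral_inner_gradient_eq_neg_integral_divergence_mul contDiff_norm_smul hφ hφs]
    _ = ∫ x, f x * φ x := by
        simp_rw [divergence_norm_smul, finrank_euclideanSpace_fin, hf]
        rw [← integral_neg, ← integral_const_mul]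
        congr 1 with x
        push_cast
        ring

/-- The exact piecewise function `u = r³/α₁` for `r < r₀`, `u = r³/α₀ + (1/α₁ − 1/α₀)r₀³`
for `r ≥ r₀`, with piecewise constant coefficient `a = α₁` inside the disk of radius `r₀`
and `a = α₀` outside, is a weak solution of `−∇·(a∇u) = f` with `f(x) = −9‖x‖` on all of
`ℝ²`: for every continuously differentiable, compactly supported test function `φ`,
`∫ a ⟪∇u, ∇φ⟫ = ∫ f φ`. (Here `gradient u` is the Mathlib gradient, which agrees with the
gradient of `u` at the points `‖x‖ ≠ r₀` where `u` is differentiable; the remaining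
circle has Lebesgue measure zero.) -/
theorem interface_solution_is_weak_solution
    (r₀ α₀ α₁ : ℝ) (hr₀ : 0 < r₀) (hα₀ : 0 < α₀) (hα₁ : 0 < α₁)
    (u : EuclideanSpace ℝ (Fin 2) → ℝ) (a f : EuclideanSpace ℝ (Fin 2) → ℝ)
    (hu : ∀ x, u x =
      if ‖x‖ < r₀ then ‖x‖ ^ 3 / α₁ else ‖x‖ ^ 3 / α₀ + (1 / α₁ - 1 / α₀) * r₀ ^ 3)
    (ha : ∀ x, a x = if ‖x‖ < r₀ then α₁ else α₀)
    (hf : ∀ x, f x = -9 * ‖x‖) :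
    ∀ φ : EuclideanSpace ℝ (Fin 2) → ℝ, ContDiff ℝ 1 φ → HasCompactSupport φ →
      ∫ x, a x * ⟪gradient u x, gradient φ x⟫_ℝ = ∫ x, f x * φ x :=
  interface_solution_is_weak_solution_general r₀ α₀ α₁ hα₀ hα₁ u a f hu ha hf
end

section
/- Let D ⊆ ℝ² be a measurable set, Ω ⊆ ℝ² a measurable subset, and λ, μ ∈ ℝ. Let u, φ : ℝ² → ℝ² be differentiable vector fields such that the integrands (tr e(u))², (tr e(φ))², tr e(u)·tr e(φ), e(u):e(u), e(φ):e(φ), e(u):e(φ), χ_Ω·tr e(u) and χ_Ω·tr e(φ) are all integrable on D. If J(u) ≤ J(u + t·φ) for every t ∈ ℝ, then the weak form of the linear elasticity interface equation holds: ∫_D [ λ·tr(e(u))·tr(e(φ)) + 2μ·e(u):e(φ) + 2(λ+μ)·χ_Ω(x)·tr(e(φ)) ] dx = 0. -/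
/-!
Along the line `t ↦ u + t φ` the strain is affine in `t`, so the energy density is a quadratic
polynomial in `t` whose linear coefficient is the integrand of the weak form. Integrating,
`J(u + t φ) = J(u) + t a + t² b`, and minimality at `t = 0` forces the first variation `a` to vanish.
-/

open MeasureTheory

/-- The strain tensor `e(v)(x) = (1/2)(Dv(x) + Dv(x)ᵀ)` of a vector field `v : ℝ² → ℝ²`,
where `Dv(x)` is the Jacobian matrix of `v` at `x`. -/
noncomputable def strain (v : EuclideanSpace ℝ (Fin 2) → EuclideanSpace ℝ (Fin 2))
    (x : EuclideanSpace ℝ (Fin 2)) : Matrix (Fin 2) (Fin 2) ℝ :=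
  Matrix.of fun i j => (1 / 2) *
    (fderiv ℝ v x (EuclideanSpace.single j 1) i + fderiv ℝ v x (EuclideanSpace.single i 1) j)

/-- The Frobenius inner product `A:B = Σ_{i,j} A_{ij} B_{ij}` of 2×2 matrices. -/
def mdot (A B : Matrix (Fin 2) (Fin 2) ℝ) : ℝ := ∑ i : Fin 2, ∑ j : Fin 2, A i j * B i j

/-- The elastic energy functional
`J(v) = ∫_D [ (λ/2)(tr e(v))² + μ e(v):e(v) + 2(λ+μ) χ_Ω tr e(v) ] dx`
of the linear elasticity interface problem. -/
noncomputable def elasticJ (D Ω : Set (EuclideanSpace ℝ (Fin 2))) (lam mu : ℝ)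
    (v : EuclideanSpace ℝ (Fin 2) → EuclideanSpace ℝ (Fin 2)) : ℝ :=
  ∫ x in D, ((lam / 2) * (Matrix.trace (strain v x)) ^ 2
    + mu * mdot (strain v x) (strain v x)
    + 2 * (lam + mu) * Set.indicator Ω (fun _ => (1 : ℝ)) x * Matrix.trace (strain v x))

lemma strain_add_smul {u φ : EuclideanSpace ℝ (Fin 2) → EuclideanSpace ℝ (Fin 2)}
    (hu : Differentiable ℝ u) (hφ : Differentiable ℝ φ) (t : ℝ) (x : EuclideanSpace ℝ (Fin 2)) :
    strain (fun y => u y + t • φ y) x = strain u x + t • strain φ x := by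
  have hfderiv : fderiv ℝ (fun y => u y + t • φ y) x = fderiv ℝ u x + t • fderiv ℝ φ x :=
    ((hu x).hasFDerivAt.add ((hφ x).hasFDerivAt.const_smul t)).fderiv
  ext i j
  simp only [strain, hfderiv, Matrix.of_apply, Matrix.add_apply, Matrix.smul_apply, add_apply,
    smul_apply, PiLp.add_apply, PiLp.smul_apply, smul_eq_mul]
  ring

lemma energyDensity_add_smul (lam mu c t : ℝ) (A B : Matrix (Fin 2) (Fin 2) ℝ) :
    (lam / 2) * (A + t • B).trace ^ 2 + mu * mdot (A + t • B) (A + t • B)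
        + 2 * (lam + mu) * c * (A + t • B).trace
      = ((lam / 2) * A.trace ^ 2 + mu * mdot A A + 2 * (lam + mu) * c * A.trace)
        + t * (lam * A.trace * B.trace + 2 * mu * mdot A B + 2 * (lam + mu) * c * B.trace)
        + t ^ 2 * ((lam / 2) * B.trace ^ 2 + mu * mdot B B) := by
  simp only [mdot, Fin.sum_univ_two, Matrix.add_apply, Matrix.smul_apply, smul_eq_mul,
    Matrix.trace_add, Matrix.trace_smul]
  ring

lemma integral_add_mul_add_sq_mul {α : Type*} [MeasurableSpace α] {μ : Measure α}
    {f g q : α → ℝ} (hf : Integrable f μ) (hg : Integrable g μ) (hq : Integrable q μ) (t : ℝ) :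
    ∫ x, (f x + t * g x + t ^ 2 * q x) ∂μ
      = ∫ x, f x ∂μ + t * ∫ x, g x ∂μ + t ^ 2 * ∫ x, q x ∂μ := by
  rw [integral_add (hf.fun_add (hg.const_mul t)) (hq.const_mul _), integral_add hf (hg.const_mul t),
    integral_const_mul, integral_const_mul]

lemma eq_zero_of_forall_le_add_mul_add_sq_mul {a b c : ℝ}
    (h : ∀ t : ℝ, c ≤ c + t * a + t ^ 2 * b) : a = 0 := by
  have hderiv : HasDerivAt (fun t : ℝ => c + t * a + t ^ 2 * b) a 0 := by
    simpa using (((hasDerivAt_id (0 : ℝ)).mul_const a).const_add c).fun_add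
      ((hasDerivAt_pow 2 (0 : ℝ)).mul_const b)
  have hmin : IsLocalMin (fun t : ℝ => c + t * a + t ^ 2 * b) 0 :=
    Filter.Eventually.of_forall fun t => by simpa using h t
  exact hmin.hasDerivAt_eq_zero hderiv

theorem elastic_eulerLagrange_of_min_general
    (D Ω : Set (EuclideanSpace ℝ (Fin 2)))
    (lam mu : ℝ)
    (u φ : EuclideanSpace ℝ (Fin 2) → EuclideanSpace ℝ (Fin 2))
    (hu : Differentiable ℝ u) (hφ : Differentiable ℝ φ)
    (h1 : IntegrableOn (fun x => (Matrix.trace (strain u x)) ^ 2) D)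
    (h2 : IntegrableOn (fun x => (Matrix.trace (strain φ x)) ^ 2) D)
    (h3 : IntegrableOn (fun x => Matrix.trace (strain u x) * Matrix.trace (strain φ x)) D)
    (h4 : IntegrableOn (fun x => mdot (strain u x) (strain u x)) D)
    (h5 : IntegrableOn (fun x => mdot (strain φ x) (strain φ x)) D)
    (h6 : IntegrableOn (fun x => mdot (strain u x) (strain φ x)) D)
    (h7 : IntegrableOn
      (fun x => Set.indicator Ω (fun _ => (1 : ℝ)) x * Matrix.trace (strain u x)) D)
    (h8 : IntegrableOn
      (fun x => Set.indicator Ω (fun _ => (1 : ℝ)) x * Matrix.trace (strain φ x)) D)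
    (hmin : ∀ t : ℝ,
      elasticJ D Ω lam mu u ≤ elasticJ D Ω lam mu (fun x => u x + t • φ x)) :
    ∫ x in D, (lam * Matrix.trace (strain u x) * Matrix.trace (strain φ x)
      + 2 * mu * mdot (strain u x) (strain φ x)
      + 2 * (lam + mu) * Set.indicator Ω (fun _ => (1 : ℝ)) x * Matrix.trace (strain φ x))
      = 0 := by
  have hF := ((h1.const_mul (lam / 2)).fun_add (h4.const_mul mu)).fun_add
    (h7.const_mul (2 * (lam + mu)))
  have hG := ((h3.const_mul lam).fun_add (h6.const_mul (2 * mu))).fun_add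
    (h8.const_mul (2 * (lam + mu)))
  have hQ := (h2.const_mul (lam / 2)).fun_add (h5.const_mul mu)
  simp only [← mul_assoc] at hF hG
  have hexpand : ∀ t : ℝ, elasticJ D Ω lam mu (fun x => u x + t • φ x) = elasticJ D Ω lam mu u
      + t * (∫ x in D, (lam * Matrix.trace (strain u x) * Matrix.trace (strain φ x)
        + 2 * mu * mdot (strain u x) (strain φ x)
        + 2 * (lam + mu) * Set.indicator Ω (fun _ => (1 : ℝ)) x * Matrix.trace (strain φ x)))
      + t ^ 2 * ∫ x in D, ((lam / 2) * Matrix.trace (strain φ x) ^ 2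
        + mu * mdot (strain φ x) (strain φ x)) := fun t => by
    simp only [elasticJ, strain_add_smul hu hφ t, energyDensity_add_smul]
    exact integral_add_mul_add_sq_mul hF hG hQ t
  exact eq_zero_of_forall_le_add_mul_add_sq_mul fun t => hexpand t ▸ hmin t

/-- If `u` minimizes the elastic energy functional along every line `u + t φ`, then the
weak form of the linear elasticity interface equation holds. -/
theorem elastic_eulerLagrange_of_min
    (D Ω : Set (EuclideanSpace ℝ (Fin 2))) (hD : MeasurableSet D) (hΩ : MeasurableSet Ω)
    (lam mu : ℝ)
    (u φ : EuclideanSpace ℝ (Fin 2) → EuclideanSpace ℝ (Fin 2))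
    (hu : Differentiable ℝ u) (hφ : Differentiable ℝ φ)
    (h1 : IntegrableOn (fun x => (Matrix.trace (strain u x)) ^ 2) D)
    (h2 : IntegrableOn (fun x => (Matrix.trace (strain φ x)) ^ 2) D)
    (h3 : IntegrableOn (fun x => Matrix.trace (strain u x) * Matrix.trace (strain φ x)) D)
    (h4 : IntegrableOn (fun x => mdot (strain u x) (strain u x)) D)
    (h5 : IntegrableOn (fun x => mdot (strain φ x) (strain φ x)) D)
    (h6 : IntegrableOn (fun x => mdot (strain u x) (strain φ x)) D)
    (h7 : IntegrableOn
      (fun x => Set.indicator Ω (fun _ => (1 : ℝ)) x * Matrix.trace (strain u x)) D)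
    (h8 : IntegrableOn
      (fun x => Set.indicator Ω (fun _ => (1 : ℝ)) x * Matrix.trace (strain φ x)) D)
    (hmin : ∀ t : ℝ,
      elasticJ D Ω lam mu u ≤ elasticJ D Ω lam mu (fun x => u x + t • φ x)) :
    ∫ x in D, (lam * Matrix.trace (strain u x) * Matrix.trace (strain φ x)
      + 2 * mu * mdot (strain u x) (strain φ x)
      + 2 * (lam + mu) * Set.indicator Ω (fun _ => (1 : ℝ)) x * Matrix.trace (strain φ x))
      = 0 :=
  elastic_eulerLagrange_of_min_general D Ω lam mu u φ hu hφ h1 h2 h3 h4 h5 h6 h7 h8 hmin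
end
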